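/- arXiv:2012.09423 — 6 statements merged into one kernel-verified Lean document; each statement's English description precedes it below -/
import Mathlib

section
/- Let γ_B, γ_F, P_B, P_F be positive real numbers, and set α_B = γ_B/P_B and τ(g) = g/α_B − 1. Then for every real g ≥ 0, the inequality τ(g)/P_F < (γ_F/P_F)·(P_B·g + 1) holds if and only if either γ_B·γ_F ≥ 1, or (γ_B·γ_F < 1 and g < α_B·(1+γ_F)/(1−γ_B·γ_F)). -/
/-! In terms of `x = g / αB ≥ 0` the constraint reads `x * (1 - γB * γF) < 1 + γF`: a linear
inequality whose right side is positive, so it always holds when the slope is nonpositive and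
otherwise amounts to `x < (1 + γF) / (1 - γB * γF)`. -/

theorem mul_lt_iff_nonpos_or_lt_div {K : Type*} [Field K] [LinearOrder K] [IsStrictOrderedRing K]
    {x c d : K} (hx : 0 ≤ x) (hd : 0 < d) :
    x * c < d ↔ c ≤ 0 ∨ (0 < c ∧ x < d / c) := by
  rcases le_or_gt c 0 with hc | hc
  · simpa [hc] using (mul_nonpos_of_nonneg_of_nonpos hx hc).trans_lt hd
  · simp [hc.not_ge, hc, lt_div_iff₀ hc]

/-- The "hidden constraint" (eq. (A.2)): for positive target SINRs `γB, γF` and powers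
`PB, PF`, with `αB = γB / PB` and decoding threshold `τ g = g / αB - 1`, for every `g ≥ 0`
the inequality `τ g / PF < (γF / PF) * (PB * g + 1)` holds iff `γB * γF ≥ 1`, or
`γB * γF < 1` and `g < αB * (1 + γF) / (1 - γB * γF)`. -/
theorem hidden_constraint (γB γF PB PF : ℝ) (hγB : 0 < γB) (hγF : 0 < γF)
    (hPB : 0 < PB) (hPF : 0 < PF) (αB : ℝ) (hαB : αB = γB / PB)
    (τ : ℝ → ℝ) (hτ : ∀ g, τ g = g / αB - 1) :
    ∀ g : ℝ, 0 ≤ g →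
      (τ g / PF < (γF / PF) * (PB * g + 1) ↔
        1 ≤ γB * γF ∨ (γB * γF < 1 ∧ g < αB * (1 + γF) / (1 - γB * γF))) := by
  intro g hg
  have hα : 0 < αB := hαB ▸ div_pos hγB hPB
  have hPB_g : PB * g = γB * (g / αB) := by
    rw [hαB]
    field_simp
  have hlinear : τ g / PF < (γF / PF) * (PB * g + 1) ↔ g / αB * (1 - γB * γF) < 1 + γF := by
    rw [hτ, hPB_g, ← mul_div_right_comm, div_lt_div_iff_of_pos_right hPF]
    constructor <;> intro h <;> linarith
  rw [hlinear, mul_lt_iff_nonpos_or_lt_div (div_nonneg hg hα.le) (by linarith), sub_nonpos,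
    sub_pos, div_lt_iff₀' hα, mul_div_assoc]
end

section
/- Let γ_B, γ_F, P_B, P_m be positive real numbers, and set α_B = γ_B/P_B, α_1 = α_B·(1+γ_F), and τ(g) = g/α_B − 1. Let g > 0 and h ≥ 0 be reals with g ≠ α_B, g ≠ α_1, P_m·h ≠ τ(g), and P_m·h ≠ (P_B·g + 1)·τ(g). Then the disjunction of the following four conditions: (i) g < α_B and P_m·h < γ_F·(P_B·g + 1); (ii) g > α_B and P_m·h < τ(g) and P_m·h < γ_F; (iii) g > α_B and P_m·h > τ(g) and P_m·h > (P_B·g + 1)·τ(g) and P_m·h < γ_F·(P_B·g + 1); (iv) g > α_B and P_m·h > τ(g) and P_m·h < (P_B·g + 1)·τ(g) and τ(g) < γ_F; holds if and only if either ( g < α_1 and P_m·h < γ_F·(P_B·g + 1) ) or ( g > α_1 and P_m·h < γ_F ). -/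
/-!
Writing `t = τ g`, the comparisons of `g` with `αB` and `α1` are the comparisons of `t` with
`0` and `γF`. With `x = Pm h` and `A = PB g + 1 ≥ 1` the equivalence then becomes a case split
on the signs of `t`, `x - t` and `x - A t`, using only `γF ≤ γF A` and `t < γF ↔ A t < γF A`.
-/

section
variable {a g c : ℝ}

lemma div_sub_one_lt_iff (ha : 0 < a) : g / a - 1 < c ↔ g < a * (1 + c) := by
  rw [sub_lt_iff_lt_add, div_lt_iff₀ ha, add_comm, mul_comm]

lemma lt_div_sub_one_iff (ha : 0 < a) : c < g / a - 1 ↔ a * (1 + c) < g := by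
  rw [lt_sub_iff_add_lt, lt_div_iff₀ ha, add_comm, mul_comm]

lemma div_sub_one_eq_iff (ha : a ≠ 0) : g / a - 1 = c ↔ g = a * (1 + c) := by
  rw [sub_eq_iff_eq_add, div_eq_iff ha, add_comm, mul_comm]

end

lemma outage_events_union_iff {x t γ A : ℝ} (hγ : 0 < γ) (hA : 1 ≤ A) (ht0 : t ≠ 0) (htγ : t ≠ γ)
    (hxt : x ≠ t) (hxAt : x ≠ A * t) :
    ((t < 0 ∧ x < γ * A) ∨ (0 < t ∧ x < t ∧ x < γ) ∨ (0 < t ∧ t < x ∧ A * t < x ∧ x < γ * A) ∨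
      (0 < t ∧ t < x ∧ x < A * t ∧ t < γ)) ↔ ((t < γ ∧ x < γ * A) ∨ (γ < t ∧ x < γ)) := by
  have hγA : γ ≤ γ * A := le_mul_of_one_le_right hγ.le hA
  have hAt : t < γ ↔ A * t < γ * A := by
    rw [mul_comm γ]; exact (mul_lt_mul_iff_right₀ (by linarith)).symm
  constructor
  · rintro (⟨ht, hx⟩ | ⟨ht, hx, hxγ⟩ | ⟨ht, hx, hxA, hxγA⟩ | ⟨ht, hx, hxA, htγ⟩)
    · exact Or.inl ⟨by linarith, hx⟩
    · rcases htγ.lt_or_gt with htγ | htγ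
      · exact Or.inl ⟨htγ, by linarith⟩
      · exact Or.inr ⟨htγ, hxγ⟩
    · exact Or.inl ⟨hAt.mpr (by linarith), hxγA⟩
    · exact Or.inl ⟨htγ, by linarith [hAt.mp htγ]⟩
  · rintro (⟨htγ, hx⟩ | ⟨htγ, hx⟩)
    · rcases ht0.lt_or_gt with ht | ht
      · exact Or.inl ⟨ht, hx⟩
      rcases hxt.lt_or_gt with hx' | hx'
      · exact Or.inr (Or.inl ⟨ht, hx', by linarith⟩)
      rcases hxAt.lt_or_gt with hxA | hxA
      · exact Or.inr (Or.inr (Or.inr ⟨ht, hx', hxA, htγ⟩))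
      · exact Or.inr (Or.inr (Or.inl ⟨ht, hx', hxA, hx⟩))
    · exact Or.inr (Or.inl ⟨by linarith, by linarith, hx⟩)

theorem cs_sgf_pc_event_simplification_general (γB γF PB Pm : ℝ) (hγB : 0 < γB) (hγF : 0 < γF)
    (hPB : 0 < PB) (αB α1 : ℝ) (hαB : αB = γB / PB)
    (hα1 : α1 = αB * (1 + γF)) (τ : ℝ → ℝ) (hτ : ∀ g, τ g = g / αB - 1)
    (g h : ℝ) (hg : 0 < g) (hg1 : g ≠ αB) (hg2 : g ≠ α1)
    (hb1 : Pm * h ≠ τ g) (hb2 : Pm * h ≠ (PB * g + 1) * τ g) :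
    ((g < αB ∧ Pm * h < γF * (PB * g + 1)) ∨
      (g > αB ∧ Pm * h < τ g ∧ Pm * h < γF) ∨
      (g > αB ∧ Pm * h > τ g ∧ Pm * h > (PB * g + 1) * τ g ∧
        Pm * h < γF * (PB * g + 1)) ∨
      (g > αB ∧ Pm * h > τ g ∧ Pm * h < (PB * g + 1) * τ g ∧ τ g < γF)) ↔
      ((g < α1 ∧ Pm * h < γF * (PB * g + 1)) ∨ (g > α1 ∧ Pm * h < γF)) := by
  have hαB0 : 0 < αB := hαB ▸ div_pos hγB hPB
  have hlt (c : ℝ) : g < αB * (1 + c) ↔ τ g < c := by rw [hτ, div_sub_one_lt_iff hαB0]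
  have hgt (c : ℝ) : αB * (1 + c) < g ↔ c < τ g := by rw [hτ, lt_div_sub_one_iff hαB0]
  have heq (c : ℝ) : g = αB * (1 + c) ↔ τ g = c := by rw [hτ, div_sub_one_eq_iff hαB0.ne']
  have hneg : g < αB ↔ τ g < 0 := by simpa using hlt 0
  have hpos : αB < g ↔ 0 < τ g := by simpa using hgt 0
  have ht0 : τ g ≠ 0 := (heq 0).not.mp (by simpa using hg1)
  have htγ : τ g ≠ γF := (heq γF).not.mp (hα1 ▸ hg2)
  simp only [gt_iff_lt]
  rw [hα1, hlt, hgt, hneg, hpos]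
  exact outage_events_union_iff hγF (le_add_of_nonneg_left (mul_pos hPB hg).le) ht0 htγ hb1 hb2

/-- Pointwise event simplification underlying Theorem 4 (from eq. (33) to eq. (41)):
with `αB = γB/PB`, `α1 = αB (1+γF)`, `τ g = g/αB - 1`, for `g > 0`, `h ≥ 0` avoiding the
boundary cases, the union of the four outage events Δ₁, Δ₃, Δ₄, Δ₅ equals
`(g < α1 ∧ Pm h < γF (PB g + 1)) ∨ (g > α1 ∧ Pm h < γF)`. -/
theorem cs_sgf_pc_event_simplification (γB γF PB Pm : ℝ) (hγB : 0 < γB) (hγF : 0 < γF)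
    (hPB : 0 < PB) (hPm : 0 < Pm) (αB α1 : ℝ) (hαB : αB = γB / PB)
    (hα1 : α1 = αB * (1 + γF)) (τ : ℝ → ℝ) (hτ : ∀ g, τ g = g / αB - 1)
    (g h : ℝ) (hg : 0 < g) (hh : 0 ≤ h) (hg1 : g ≠ αB) (hg2 : g ≠ α1)
    (hb1 : Pm * h ≠ τ g) (hb2 : Pm * h ≠ (PB * g + 1) * τ g) :
    ((g < αB ∧ Pm * h < γF * (PB * g + 1)) ∨
      (g > αB ∧ Pm * h < τ g ∧ Pm * h < γF) ∨
      (g > αB ∧ Pm * h > τ g ∧ Pm * h > (PB * g + 1) * τ g ∧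
        Pm * h < γF * (PB * g + 1)) ∨
      (g > αB ∧ Pm * h > τ g ∧ Pm * h < (PB * g + 1) * τ g ∧ τ g < γF)) ↔
      ((g < α1 ∧ Pm * h < γF * (PB * g + 1)) ∨ (g > α1 ∧ Pm * h < γF)) :=
  cs_sgf_pc_event_simplification_general γB γF PB Pm hγB hγF hPB αB α1 hαB hα1 τ hτ g h hg hg1 hg2
    hb1 hb2
end

section
/- Let γ_B, γ_F, P_B, P_m be positive real numbers, and set α_B = γ_B/P_B, α_1 = α_B·(1+γ_F), and τ(g) = g/α_B − 1. Let G and H be independent real-valued random variables on a probability space, each almost surely positive and each with an atomless distribution. Then P(G < α_B and P_m·H < γ_F·(P_B·G+1)) + P(G > α_B and P_m·H < τ(G) and P_m·H < γ_F) + P(G > α_B and P_m·H > τ(G) and P_m·H > (P_B·G+1)·τ(G) and P_m·H < γ_F·(P_B·G+1)) + P(G > α_B and P_m·H > τ(G) and P_m·H < (P_B·G+1)·τ(G) and τ(G) < γ_F) = P(G < α_1 and P_m·H < γ_F·(P_B·G+1)) + P(G > α_1 and P_m·H < γ_F). -/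
/-!
The four events on the left are disjoint, and off the lines `G = α_B`, `G = α_1` and the curves
`P_m H = τ(G)`, `P_m H = (P_B G + 1) τ(G)` their union is the disjoint union on the right: for
`α_B < G < α_1` (i.e. `0 < τ(G) < γ_F`) the events `Δ₃, Δ₄, Δ₅` cut the interval
`P_m H < γ_F (P_B G + 1)` at `τ(G)` and `(P_B G + 1) τ(G)`, while for `G > α_1` they collapse to
`P_m H < γ_F`. The exceptional set is null: `G` has no atoms, and `H`, independent of `G` and
without atoms, almost surely avoids the graph of any measurable function of `G`.
-/

open MeasureTheory ProbabilityTheory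

section OutageRegions

variable {γ c t x : ℝ}

theorem below_threshold_outage_iff (hγ : 0 < γ) (hc : 1 ≤ c) (htγ : t < γ) (hxt : x ≠ t)
    (hxct : x ≠ c * t) :
    (x < t ∧ x < γ) ∨ (t < x ∧ c * t < x ∧ x < γ * c) ∨ (t < x ∧ x < c * t ∧ t < γ) ↔
      x < γ * c := by
  have hγc : γ ≤ γ * c := le_mul_of_one_le_right hγ.le hc
  constructor
  · rintro (⟨hx, -⟩ | ⟨-, -, hx⟩ | ⟨-, hx, -⟩)
    · linarith
    · exact hx
    · nlinarith
  · intro hx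
    rcases hxt.lt_or_gt with hxt | hxt
    · exact Or.inl ⟨hxt, by linarith⟩
    rcases hxct.lt_or_gt with hxct | hxct
    · exact Or.inr (Or.inr ⟨hxt, hxct, htγ⟩)
    · exact Or.inr (Or.inl ⟨hxt, hxct, hx⟩)

theorem above_threshold_outage_iff (hc : 0 < c) (hγt : γ < t) :
    (x < t ∧ x < γ) ∨ (t < x ∧ c * t < x ∧ x < γ * c) ∨ (t < x ∧ x < c * t ∧ t < γ) ↔
      x < γ := by
  constructor
  · rintro (⟨-, hx⟩ | ⟨-, hx, hx'⟩ | ⟨-, -, h⟩)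
    · exact hx
    · nlinarith
    · linarith
  · exact fun hx ↦ Or.inl ⟨hx.trans hγt, hx⟩

end OutageRegions

theorem outage_regions_iff {γF PB αB g x : ℝ} (hγF : 0 < γF) (hPB : 0 < PB) (hαB : 0 < αB)
    (hgB : g ≠ αB) (hg1 : g ≠ αB * (1 + γF)) (hxt : x ≠ g / αB - 1)
    (hxct : x ≠ (PB * g + 1) * (g / αB - 1)) :
    (g < αB ∧ x < γF * (PB * g + 1)) ∨
      (g > αB ∧ x < g / αB - 1 ∧ x < γF) ∨
      (g > αB ∧ x > g / αB - 1 ∧ x > (PB * g + 1) * (g / αB - 1) ∧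
        x < γF * (PB * g + 1)) ∨
      (g > αB ∧ x > g / αB - 1 ∧ x < (PB * g + 1) * (g / αB - 1) ∧ g / αB - 1 < γF) ↔
    (g < αB * (1 + γF) ∧ x < γF * (PB * g + 1)) ∨ (g > αB * (1 + γF) ∧ x < γF) := by
  have hα1 : αB < αB * (1 + γF) := lt_mul_of_one_lt_right hαB (by linarith)
  have hτ_lt : g / αB - 1 < γF ↔ g < αB * (1 + γF) := by
    rw [sub_lt_iff_lt_add', div_lt_iff₀' hαB]
  have hlt_τ : γF < g / αB - 1 ↔ αB * (1 + γF) < g := by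
    rw [lt_sub_iff_add_lt', lt_div_iff₀' hαB]
  simp only [gt_iff_lt]
  rcases hgB.lt_or_gt with hg | hg
  · simp only [hg, hg.trans hα1, hg.not_gt, (hg.trans hα1).not_gt, true_and, false_and, or_false]
  have hc : 1 ≤ PB * g + 1 := by nlinarith
  simp only [hg, hg.not_gt, true_and, false_and, false_or]
  rcases hg1.lt_or_gt with hg1 | hg1
  · simp only [hg1, hg1.not_gt, true_and, false_and, or_false]
    exact below_threshold_outage_iff hγF hc (hτ_lt.2 hg1) hxt hxct
  · simp only [hg1, hg1.not_gt, true_and, false_and, false_or]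
    exact above_threshold_outage_iff (by linarith) (hlt_τ.2 hg1)

section AlmostSureAvoidance

variable {Ω α β : Type*} [MeasurableSpace Ω] {μ : Measure Ω}
  [MeasurableSpace α] [MeasurableSpace β] {X : Ω → α} {Y : Ω → β}

theorem ae_ne_of_nullSingletonClass_map (hX : Measurable X) [NullSingletonClass (μ.map X)]
    (a : α) : ∀ᵐ ω ∂μ, X ω ≠ a :=
  ae_of_ae_map hX.aemeasurable ((μ.map X).ae_ne a)

theorem ProbabilityTheory.IndepFun.ae_ne_comp [IsFiniteMeasure μ] [MeasurableEq β]
    (hXY : IndepFun X Y μ) (hX : Measurable X) (hY : Measurable Y)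
    [NullSingletonClass (μ.map Y)] {f : α → β} (hf : Measurable f) :
    ∀ᵐ ω ∂μ, Y ω ≠ f (X ω) := by
  have hlaw : μ.map (fun ω ↦ (X ω, Y ω)) = (μ.map X).prod (μ.map Y) :=
    (indepFun_iff_map_prod_eq_prod_map_map hX.aemeasurable hY.aemeasurable).1 hXY
  have hgraph : MeasurableSet {p : α × β | p.2 ≠ f p.1} :=
    (measurableSet_eq_fun measurable_snd (hf.comp measurable_fst)).compl
  have hprod : ∀ᵐ p ∂(μ.map X).prod (μ.map Y), p.2 ≠ f p.1 :=
    (Measure.ae_prod_iff_ae_ae hgraph).2 (ae_of_all _ fun a ↦ (μ.map Y).ae_ne (f a))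
  exact ae_of_ae_map (hX.prodMk hY).aemeasurable (hlaw ▸ hprod)

end AlmostSureAvoidance

theorem cs_sgf_pc_outage_simplification_general {Ω : Type*} [MeasureSpace Ω]
    [IsProbabilityMeasure (ℙ : Measure Ω)] (γB γF PB Pm : ℝ)
    (hγB : 0 < γB) (hγF : 0 < γF) (hPB : 0 < PB) (hPm : 0 < Pm)
    (αB α1 : ℝ) (hαB : αB = γB / PB) (hα1 : α1 = αB * (1 + γF))
    (τ : ℝ → ℝ) (hτ : ∀ g, τ g = g / αB - 1)
    (G H : Ω → ℝ) (hGmeas : Measurable G) (hHmeas : Measurable H)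
    (hind : IndepFun G H ℙ)
    (hGatomless : NoAtoms (Measure.map G ℙ)) (hHatomless : NoAtoms (Measure.map H ℙ)) :
    (ℙ {ω | G ω < αB ∧ Pm * H ω < γF * (PB * G ω + 1)}).toReal +
      (ℙ {ω | G ω > αB ∧ Pm * H ω < τ (G ω) ∧ Pm * H ω < γF}).toReal +
      (ℙ {ω | G ω > αB ∧ Pm * H ω > τ (G ω) ∧
        Pm * H ω > (PB * G ω + 1) * τ (G ω) ∧
        Pm * H ω < γF * (PB * G ω + 1)}).toReal +
      (ℙ {ω | G ω > αB ∧ Pm * H ω > τ (G ω) ∧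
        Pm * H ω < (PB * G ω + 1) * τ (G ω) ∧ τ (G ω) < γF}).toReal =
      (ℙ {ω | G ω < α1 ∧ Pm * H ω < γF * (PB * G ω + 1)}).toReal +
        (ℙ {ω | G ω > α1 ∧ Pm * H ω < γF}).toReal := by
  subst hα1
  have hαB_pos : 0 < αB := hαB ▸ div_pos hγB hPB
  have : NullSingletonClass (Measure.map G ℙ) := hGatomless
  have : NullSingletonClass (Measure.map H ℙ) := hHatomless
  have hcurve (f : ℝ → ℝ) (hf : Measurable f) : ∀ᵐ ω, Pm * H ω ≠ f (G ω) :=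
    (hind.ae_ne_comp hGmeas hHmeas (f := fun g ↦ f g / Pm) (by fun_prop)).mono
      fun ω hne heq ↦ hne (by rw [← heq, mul_div_cancel_left₀ _ hPm.ne'])
  simp only [hτ, ← measureReal_def, add_assoc]
  rw [← measureReal_union, ← measureReal_union, ← measureReal_union, ← measureReal_union]
  · refine measureReal_congr (Filter.eventuallyEq_set.2 ?_)
    filter_upwards [ae_ne_of_nullSingletonClass_map hGmeas αB,
      ae_ne_of_nullSingletonClass_map hGmeas (αB * (1 + γF)),
      hcurve (fun g ↦ g / αB - 1) (by fun_prop),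
      hcurve (fun g ↦ (PB * g + 1) * (g / αB - 1)) (by fun_prop)] with ω hGαB hGα1 hHτ hHcτ
    exact outage_regions_iff hγF hPB hαB_pos hGαB hGα1 hHτ hHcτ
  all_goals first
    | exact Set.disjoint_left.2 fun _ h h' ↦ by grind
    | measurability

/-- Exact simplification of the CS-SGF-PC outage probability (eq. (33) to eq. (41)):
for independent, almost surely positive random variables `G`, `H` with atomless laws,
`Δ₁ + Δ₃ + Δ₄ + Δ₅ = P(G < α1, Pm H < γF (PB G + 1)) + P(G > α1, Pm H < γF)`. -/
theorem cs_sgf_pc_outage_simplification {Ω : Type*} [MeasureSpace Ω]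
    [IsProbabilityMeasure (ℙ : Measure Ω)] (γB γF PB Pm : ℝ)
    (hγB : 0 < γB) (hγF : 0 < γF) (hPB : 0 < PB) (hPm : 0 < Pm)
    (αB α1 : ℝ) (hαB : αB = γB / PB) (hα1 : α1 = αB * (1 + γF))
    (τ : ℝ → ℝ) (hτ : ∀ g, τ g = g / αB - 1)
    (G H : Ω → ℝ) (hGmeas : Measurable G) (hHmeas : Measurable H)
    (hind : IndepFun G H ℙ)
    (hGpos : ∀ᵐ ω ∂(ℙ : Measure Ω), 0 < G ω)
    (hHpos : ∀ᵐ ω ∂(ℙ : Measure Ω), 0 < H ω)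
    (hGatomless : NoAtoms (Measure.map G ℙ)) (hHatomless : NoAtoms (Measure.map H ℙ)) :
    (ℙ {ω | G ω < αB ∧ Pm * H ω < γF * (PB * G ω + 1)}).toReal +
      (ℙ {ω | G ω > αB ∧ Pm * H ω < τ (G ω) ∧ Pm * H ω < γF}).toReal +
      (ℙ {ω | G ω > αB ∧ Pm * H ω > τ (G ω) ∧
        Pm * H ω > (PB * G ω + 1) * τ (G ω) ∧
        Pm * H ω < γF * (PB * G ω + 1)}).toReal +
      (ℙ {ω | G ω > αB ∧ Pm * H ω > τ (G ω) ∧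
        Pm * H ω < (PB * G ω + 1) * τ (G ω) ∧ τ (G ω) < γF}).toReal =
      (ℙ {ω | G ω < α1 ∧ Pm * H ω < γF * (PB * G ω + 1)}).toReal +
        (ℙ {ω | G ω > α1 ∧ Pm * H ω < γF}).toReal :=
  cs_sgf_pc_outage_simplification_general γB γF PB Pm hγB hγF hPB hPm αB α1 hαB hα1 τ hτ G H hGmeas
    hHmeas hind hGatomless hHatomless
end

section
/- Let D > 0, α > 0 and let K ≥ 1 be a natural number. Define Φ_K(x) = (2/D²)·∫_0^D (1 − exp(−(1+r^α)·x))^K·r dr for x ≥ 0. Then: (i) (2/D²)·∫_0^D (1+r^α)^K·r dr = Σ_{j=0}^{K} C(K,j)·2·D^{j·α}/(j·α + 2), where C(K,j) is the binomial coefficient; and (ii) lim_{x→0⁺} Φ_K(x)/x^K = (2/D²)·∫_0^D (1+r^α)^K·r dr. -/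
/-!
Expanding `(1 + r^α)^K` binomially reduces (i) to the integrals `∫_0^D r^(jα+1) dr`.
For (ii), `Φ_K(x)/x^K = (2/D²) ∫_0^D ((1 - e^{-(1+r^α)x})/x)^K r dr`; the integrand tends to
`(1+r^α)^K r` because `x ↦ 1 - e^{-tx}` has derivative `t` at `0`, and it is dominated by that
limit since `0 ≤ 1 - e^{-u} ≤ u` for `u ≥ 0`, so dominated convergence applies.
-/

open Real Filter Finset Topology

theorem tendsto_one_sub_exp_neg_mul_div (t : ℝ) :
    Tendsto (fun x => (1 - exp (-t * x)) / x) (𝓝[>] 0) (𝓝 t) := by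
  have hderiv : HasDerivAt (fun x => 1 - exp (-t * x)) t 0 := by
    simpa using ((hasDerivAt_id (0 : ℝ)).const_mul (-t)).exp.const_sub 1
  refine hderiv.tendsto_slope_zero_right.congr fun x => ?_
  simp [div_eq_inv_mul]

theorem abs_one_sub_exp_neg_mul_div_le {t x : ℝ} (ht : 0 ≤ t) (hx : 0 < x) :
    |(1 - exp (-t * x)) / x| ≤ t := by
  have hnonneg : 0 ≤ 1 - exp (-t * x) := by
    have : exp (-t * x) ≤ 1 := exp_le_one_iff.mpr (by nlinarith)
    linarith
  have hle : 1 - exp (-t * x) ≤ t * x := by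
    have := one_sub_le_exp_neg (t * x)
    rw [neg_mul]; linarith
  rw [abs_of_nonneg (div_nonneg hnonneg hx.le)]
  exact (div_le_iff₀ hx).mpr hle

theorem tendsto_integral_one_sub_exp_neg_mul_div_pow_mul {a b : ℝ} {t w : ℝ → ℝ}
    (ht : Continuous t) (hw : Continuous w) (ht0 : ∀ r ∈ Set.uIoc a b, 0 ≤ t r) (K : ℕ) :
    Tendsto (fun x => ∫ r in a..b, ((1 - exp (-t r * x)) / x) ^ K * w r) (𝓝[>] 0)
      (𝓝 (∫ r in a..b, t r ^ K * w r)) := by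
  refine intervalIntegral.tendsto_integral_filter_of_dominated_convergence
    (fun r => t r ^ K * |w r|) ?_ ?_
    ((by fun_prop : Continuous fun r => t r ^ K * |w r|).intervalIntegrable _ _) ?_
  · exact Eventually.of_forall fun x =>
      (by fun_prop : Continuous fun r => ((1 - exp (-t r * x)) / x) ^ K * w r).aestronglyMeasurable
  · filter_upwards [self_mem_nhdsWithin] with x (hx : 0 < x)
    refine Eventually.of_forall fun r hr => ?_
    rw [norm_mul, norm_pow, Real.norm_eq_abs, Real.norm_eq_abs]
    gcongr
    exact abs_one_sub_exp_neg_mul_div_le (ht0 r hr) hx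
  · exact Eventually.of_forall fun r _ =>
      ((tendsto_one_sub_exp_neg_mul_div (t r)).pow K).mul_const (w r)

theorem one_add_rpow_pow_mul_self_eq_sum {α r : ℝ} (hα : 0 ≤ α) (hr : 0 ≤ r) (K : ℕ) :
    (1 + r ^ α) ^ K * r = ∑ j ∈ range (K + 1), (K.choose j : ℝ) * r ^ ((j : ℝ) * α + 1) := by
  rw [add_comm, add_pow, sum_mul]
  refine sum_congr rfl fun j _ => ?_
  rw [← rpow_natCast (r ^ α), ← rpow_mul hr, mul_comm α, rpow_add_one' hr (by positivity)]
  ring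

theorem integral_one_add_rpow_pow_mul_self {D α : ℝ} (hD : 0 ≤ D) (hα : 0 ≤ α) (K : ℕ) :
    ∫ r in (0:ℝ)..D, (1 + r ^ α) ^ K * r =
      ∑ j ∈ range (K + 1), (K.choose j : ℝ) * (D ^ ((j : ℝ) * α + 2) / ((j : ℝ) * α + 2)) := by
  have hexp : ∀ j : ℕ, -1 < (j : ℝ) * α + 1 := fun j =>
    neg_one_lt_zero.trans_le (by positivity)
  rw [intervalIntegral.integral_congr fun r hr =>
      one_add_rpow_pow_mul_self_eq_sum hα (Set.uIcc_of_le hD ▸ hr).1 K,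
    intervalIntegral.integral_finsetSum fun j _ =>
      (intervalIntegral.intervalIntegrable_rpow' (hexp j)).const_mul _]
  refine sum_congr rfl fun j _ => ?_
  rw [intervalIntegral.integral_const_mul, integral_rpow (.inl (hexp j)),
    zero_rpow (by positivity)]
  ring_nf

theorem cdf_scheduling_small_x_asymptotics_general (D α : ℝ) (hD : 0 < D) (hα : 0 < α)
    (K : ℕ) (Φ : ℝ → ℝ)
    (hΦ : ∀ x, Φ x = (2 / D ^ 2) *
      ∫ r in (0:ℝ)..D, (1 - Real.exp (-(1 + r ^ α) * x)) ^ K * r) :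
    ((2 / D ^ 2) * ∫ r in (0:ℝ)..D, (1 + r ^ α) ^ K * r =
        ∑ j ∈ Finset.range (K + 1),
          (K.choose j : ℝ) * 2 * D ^ ((j : ℝ) * α) / ((j : ℝ) * α + 2)) ∧
      Filter.Tendsto (fun x => Φ x / x ^ K) (nhdsWithin 0 (Set.Ioi 0))
        (nhds ((2 / D ^ 2) * ∫ r in (0:ℝ)..D, (1 + r ^ α) ^ K * r)) := by
  constructor
  · rw [integral_one_add_rpow_pow_mul_self hD.le hα.le, mul_sum]
    refine sum_congr rfl fun j _ => ?_
    rw [rpow_add hD, rpow_two]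
    field_simp
  · have hΦ_div : ∀ x, Φ x / x ^ K =
        (2 / D ^ 2) * ∫ r in (0:ℝ)..D, ((1 - exp (-(1 + r ^ α) * x)) / x) ^ K * r := by
      intro x
      simp_rw [div_pow, div_mul_eq_mul_div, intervalIntegral.integral_div, hΦ]
      ring
    simp_rw [hΦ_div]
    have ht : Continuous fun r : ℝ => 1 + r ^ α :=
      continuous_const.add (continuous_rpow_const hα.le)
    refine (tendsto_integral_one_sub_exp_neg_mul_div_pow_mul ht continuous_id
      (fun r hr => ?_) K).const_mul _
    exact add_nonneg zero_le_one (rpow_nonneg (Set.uIoc_of_le hD.le ▸ hr).1.le α)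

/-- Small-argument asymptotics of the CDF-scheduled channel-gain CDF (eq. (B.1)):
with `Φ_K(x) = (2/D²) ∫_0^D (1 - e^{-(1+r^α) x})^K r dr`,
(i) `(2/D²) ∫_0^D (1+r^α)^K r dr = Σ_{j=0}^K C(K,j) 2 D^{jα}/(jα+2)`, and
(ii) `Φ_K(x)/x^K → (2/D²) ∫_0^D (1+r^α)^K r dr` as `x → 0⁺`. -/
theorem cdf_scheduling_small_x_asymptotics (D α : ℝ) (hD : 0 < D) (hα : 0 < α)
    (K : ℕ) (hK : 1 ≤ K) (Φ : ℝ → ℝ)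
    (hΦ : ∀ x, Φ x = (2 / D ^ 2) *
      ∫ r in (0:ℝ)..D, (1 - Real.exp (-(1 + r ^ α) * x)) ^ K * r) :
    ((2 / D ^ 2) * ∫ r in (0:ℝ)..D, (1 + r ^ α) ^ K * r =
        ∑ j ∈ Finset.range (K + 1),
          (K.choose j : ℝ) * 2 * D ^ ((j : ℝ) * α) / ((j : ℝ) * α + 2)) ∧
      Filter.Tendsto (fun x => Φ x / x ^ K) (nhdsWithin 0 (Set.Ioi 0))
        (nhds ((2 / D ^ 2) * ∫ r in (0:ℝ)..D, (1 + r ^ α) ^ K * r)) :=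
  cdf_scheduling_small_x_asymptotics_general D α hD hα K Φ hΦ
end

section
/- Let α > 0, D_F > 0, 0 ≤ D_0 < D_1, γ_B, γ_F > 0, and let K ≥ 1 be a natural number. Define Φ_K(x) = (2/D_F²)·∫_0^{D_F} (1 − exp(−(1+r^α)·x))^K·r dr, f_B(w) = (2/(D_1²−D_0²))·∫_{D_0}^{D_1} (1+r^α)·exp(−(1+r^α)·w)·r dr, and F_B(y) = (2/(D_1²−D_0²))·∫_{D_0}^{D_1} (1 − exp(−(1+r^α)·y))·r dr. For P > 0, define the outage probability P_out(P) = ∫_0^{γ_B·(1+γ_F)/P} f_B(w)·Φ_K(γ_F·w + γ_F/P) dw + (1 − F_B(γ_B·(1+γ_F)/P))·Φ_K(γ_F/P). Then lim_{P→∞} P^K·P_out(P) = γ_F^K·(2/D_F²)·∫_0^{D_F} (1+r^α)^K·r dr. In particular, the outage probability decays like P^{−K}, i.e., a diversity order of K is achieved for all positive target SINRs γ_B, γ_F. -/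
/-!
Since `1 - e^{-t} ≤ t` and `P (1 - e^{-aγ/P}) → aγ`, dominated convergence gives
`P^K Φ(γ/P) → γ^K (2/D_F²) ∫_0^{D_F} (1 + r^α)^K r dr`. The second summand of `P_out` therefore
carries the whole limit, because `F_B` is continuous with `F_B(0) = 0`. The first summand is an
integral over an interval of length `O(1/P)` of the bounded density `f_B` against `Φ` evaluated
below `γ_F (c + 1)/P`, where `c = γ_B (1 + γ_F)`; it is `O(P^{-K-1})`.
-/

open Real Filter MeasureTheory Topology Set

lemma tendsto_mul_one_sub_exp_neg_div_atTop (a : ℝ) :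
    Tendsto (fun P : ℝ => P * (1 - exp (-a / P))) atTop (𝓝 a) := by
  have hslope := ((hasDerivAt_id (0 : ℝ)).const_mul (-a)).exp.tendsto_slope_zero
  have hinv : Tendsto (fun P : ℝ => P⁻¹) atTop (𝓝[≠] 0) :=
    tendsto_inv_atTop_nhdsGT_zero.mono_right (nhdsWithin_mono _ fun _ hx => ne_of_gt hx)
  convert (hslope.comp hinv).neg using 1
  · ext P
    simp only [div_eq_mul_inv, neg_mul, zero_add, id_eq, mul_zero, exp_zero, smul_eq_mul,
      Function.comp_apply, inv_inv]
    ring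
  · simp

lemma one_sub_exp_neg_nonneg {t : ℝ} (ht : 0 ≤ t) : 0 ≤ 1 - exp (-t) :=
  sub_nonneg.2 (exp_le_one_iff.2 (neg_nonpos.2 ht))

lemma one_sub_exp_neg_le (t : ℝ) : 1 - exp (-t) ≤ t := by
  linarith [one_sub_le_exp_neg t]

section RateIntegral

variable {a ρ : ℝ → ℝ} {lo hi : ℝ}

lemma integral_one_sub_exp_pow_nonneg (hlo : lo ≤ hi) (ha : ∀ r ∈ Icc lo hi, 0 ≤ a r)
    (hρ : ∀ r ∈ Icc lo hi, 0 ≤ ρ r) (K : ℕ) {x : ℝ} (hx : 0 ≤ x) :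
    0 ≤ ∫ r in lo..hi, (1 - exp (-a r * x)) ^ K * ρ r :=
  intervalIntegral.integral_nonneg hlo fun r hr => by
    rw [neg_mul]
    exact mul_nonneg (pow_nonneg (one_sub_exp_neg_nonneg (mul_nonneg (ha r hr) hx)) K) (hρ r hr)

lemma monotoneOn_integral_one_sub_exp_pow (ha_cont : Continuous a) (hρ_cont : Continuous ρ)
    (hlo : lo ≤ hi) (ha : ∀ r ∈ Icc lo hi, 0 ≤ a r) (hρ : ∀ r ∈ Icc lo hi, 0 ≤ ρ r) (K : ℕ) :
    MonotoneOn (fun x => ∫ r in lo..hi, (1 - exp (-a r * x)) ^ K * ρ r) (Ici 0) := by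
  intro x hx y _ hxy
  refine intervalIntegral.integral_mono_on hlo (Continuous.intervalIntegrable (by fun_prop) _ _)
    (Continuous.intervalIntegrable (by fun_prop) _ _) fun r hr => ?_
  have hbase_nonneg : 0 ≤ 1 - exp (-(a r * x)) :=
    one_sub_exp_neg_nonneg (mul_nonneg (ha r hr) hx)
  simp only [neg_mul]
  gcongr
  · exact hρ r hr
  · exact ha r hr

lemma tendsto_pow_mul_integral_one_sub_exp_pow (ha_cont : Continuous a) (hρ_cont : Continuous ρ)
    (hlo : lo ≤ hi) (ha : ∀ r ∈ Icc lo hi, 0 ≤ a r) (K : ℕ) {γ : ℝ} (hγ : 0 ≤ γ) :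
    Tendsto (fun P : ℝ => P ^ K * ∫ r in lo..hi, (1 - exp (-a r * (γ / P))) ^ K * ρ r) atTop
      (𝓝 (γ ^ K * ∫ r in lo..hi, a r ^ K * ρ r)) := by
  have hpoint : ∀ r, Tendsto (fun P : ℝ => P * (1 - exp (-a r * (γ / P)))) atTop
      (𝓝 (a r * γ)) := fun r => by
    simpa only [neg_mul, mul_div_assoc, neg_div] using
      tendsto_mul_one_sub_exp_neg_div_atTop (a r * γ)
  have hdom : ∀ᶠ P : ℝ in atTop, ∀ r ∈ uIoc lo hi,
      ‖(P * (1 - exp (-a r * (γ / P)))) ^ K * ρ r‖ ≤ (a r * γ) ^ K * ‖ρ r‖ := by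
    filter_upwards [eventually_gt_atTop 0] with P hP r hr
    rw [uIoc_of_le hlo] at hr
    have ht : 0 ≤ a r * (γ / P) :=
      mul_nonneg (ha r (Ioc_subset_Icc_self hr)) (div_nonneg hγ hP.le)
    have hlow : 0 ≤ P * (1 - exp (-a r * (γ / P))) := by
      rw [neg_mul]
      exact mul_nonneg hP.le (one_sub_exp_neg_nonneg ht)
    have hup : P * (1 - exp (-a r * (γ / P))) ≤ a r * γ := by
      calc P * (1 - exp (-a r * (γ / P))) ≤ P * (a r * (γ / P)) := by
            rw [neg_mul]; exact mul_le_mul_of_nonneg_left (one_sub_exp_neg_le _) hP.le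
        _ = a r * γ := by field_simp
    rw [norm_mul, norm_pow, Real.norm_of_nonneg hlow]
    exact mul_le_mul_of_nonneg_right (pow_le_pow_left₀ hlow hup K) (norm_nonneg _)
  have hlim := intervalIntegral.tendsto_integral_filter_of_dominated_convergence (μ := volume)
    (fun r => (a r * γ) ^ K * ‖ρ r‖) (.of_forall fun P => by fun_prop)
    (hdom.mono fun P hP => .of_forall hP) (Continuous.intervalIntegrable (by fun_prop) _ _)
    (.of_forall fun r _ => ((hpoint r).pow K).mul_const (ρ r))
  convert hlim using 1
  · ext P
    rw [← intervalIntegral.integral_const_mul]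
    simp only [mul_pow, mul_assoc]
  · rw [← intervalIntegral.integral_const_mul]
    simp only [mul_pow, mul_right_comm _ (γ ^ K), mul_comm (γ ^ K)]

end RateIntegral

lemma tendsto_pow_mul_integral_zero_div_of_monotoneOn {f g : ℝ → ℝ} {c γ L : ℝ} (K : ℕ)
    (hc : 0 ≤ c) (hγ : 0 ≤ γ) (hf : ContinuousOn f (Icc 0 c)) (hg_nonneg : ∀ x, 0 ≤ x → 0 ≤ g x)
    (hg_mono : MonotoneOn g (Ici 0))
    (hlim : Tendsto (fun P : ℝ => P ^ K * g (γ * (c + 1) / P)) atTop (𝓝 L)) :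
    Tendsto (fun P : ℝ => P ^ K * ∫ w in 0..c / P, f w * g (γ * w + γ / P)) atTop (𝓝 0) := by
  obtain ⟨M, hM⟩ := isCompact_Icc.exists_bound_of_continuousOn hf
  have hbound :
      Tendsto (fun P : ℝ => M * c * P⁻¹ * (P ^ K * g (γ * (c + 1) / P))) atTop (𝓝 0) := by
    simpa using (tendsto_inv_atTop_zero.const_mul (M * c)).mul hlim
  refine squeeze_zero_norm' ?_ hbound
  filter_upwards [eventually_ge_atTop 1] with P hP
  have hP0 : 0 < P := one_pos.trans_le hP
  have hcP : 0 ≤ c / P := div_nonneg hc hP0.le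
  have hintegrand :
      ∀ w ∈ uIoc 0 (c / P), ‖f w * g (γ * w + γ / P)‖ ≤ M * g (γ * (c + 1) / P) := by
    intro w hw
    rw [uIoc_of_le hcP] at hw
    have hwc : w ≤ c := hw.2.trans (div_le_self hc hP)
    have harg : 0 ≤ γ * w + γ / P := by have := hw.1.le; positivity
    have harg_le : γ * w + γ / P ≤ γ * (c + 1) / P := by
      rw [mul_add, mul_one, add_div, mul_div_assoc]
      gcongr
      exact hw.2
    have hfw := hM w ⟨hw.1.le, hwc⟩
    rw [norm_mul, Real.norm_of_nonneg (hg_nonneg _ harg)]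
    exact mul_le_mul hfw (hg_mono harg (harg.trans harg_le) harg_le) (hg_nonneg _ harg)
      ((norm_nonneg _).trans hfw)
  calc ‖P ^ K * ∫ w in 0..c / P, f w * g (γ * w + γ / P)‖
      = P ^ K * ‖∫ w in 0..c / P, f w * g (γ * w + γ / P)‖ := by
        rw [norm_mul, norm_pow, Real.norm_of_nonneg hP0.le]
    _ ≤ P ^ K * (M * g (γ * (c + 1) / P) * |c / P - 0|) := by
        gcongr
        exact intervalIntegral.norm_integral_le_of_norm_le_const hintegrand
    _ = M * c * P⁻¹ * (P ^ K * g (γ * (c + 1) / P)) := by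
        rw [sub_zero, abs_of_nonneg hcP]
        ring

theorem cs_sgf_pc_full_diversity_general (α DF D0 D1 γB γF : ℝ)
    (hα : 0 < α) (hDF : 0 < DF)
    (hγB : 0 < γB) (hγF : 0 < γF) (K : ℕ)
    (Φ fB FB Pout : ℝ → ℝ)
    (hΦ : ∀ x, Φ x = (2 / DF ^ 2) *
      ∫ r in (0:ℝ)..DF, (1 - Real.exp (-(1 + r ^ α) * x)) ^ K * r)
    (hfB : ∀ w, fB w = (2 / (D1 ^ 2 - D0 ^ 2)) *
      ∫ r in D0..D1, (1 + r ^ α) * Real.exp (-(1 + r ^ α) * w) * r)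
    (hFB : ∀ y, FB y = (2 / (D1 ^ 2 - D0 ^ 2)) *
      ∫ r in D0..D1, (1 - Real.exp (-(1 + r ^ α) * y)) * r)
    (hPout : ∀ P : ℝ, 0 < P → Pout P =
      (∫ w in (0:ℝ)..(γB * (1 + γF) / P), fB w * Φ (γF * w + γF / P)) +
        (1 - FB (γB * (1 + γF) / P)) * Φ (γF / P)) :
    Filter.Tendsto (fun P : ℝ => P ^ K * Pout P) Filter.atTop
      (nhds (γF ^ K * ((2 / DF ^ 2) * ∫ r in (0:ℝ)..DF, (1 + r ^ α) ^ K * r))) := by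
  have hrate : Continuous fun r : ℝ => 1 + r ^ α :=
    continuous_const.add (continuous_rpow_const hα.le)
  have hrate_nonneg : ∀ r ∈ Icc 0 DF, 0 ≤ 1 + r ^ α :=
    fun r hr => add_nonneg zero_le_one (rpow_nonneg hr.1 α)
  have hΦ_lim : ∀ γ, 0 ≤ γ → Tendsto (fun P : ℝ => P ^ K * Φ (γ / P)) atTop
      (𝓝 (γ ^ K * ((2 / DF ^ 2) * ∫ r in (0:ℝ)..DF, (1 + r ^ α) ^ K * r))) := fun γ hγ => by
    simp only [hΦ, mul_left_comm _ (2 / DF ^ 2)]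
    exact (tendsto_pow_mul_integral_one_sub_exp_pow hrate continuous_id hDF.le hrate_nonneg K
      hγ).const_mul _
  have hΦ_nonneg : ∀ x, 0 ≤ x → 0 ≤ Φ x := fun x hx => by
    rw [hΦ]
    exact mul_nonneg (by positivity)
      (integral_one_sub_exp_pow_nonneg hDF.le hrate_nonneg (fun r hr => hr.1) K hx)
  have hΦ_mono : MonotoneOn Φ (Ici 0) := fun x hx y hy hxy => by
    rw [hΦ, hΦ]
    exact mul_le_mul_of_nonneg_left (monotoneOn_integral_one_sub_exp_pow hrate continuous_id
      hDF.le hrate_nonneg (fun r hr => hr.1) K hx hy hxy) (by positivity)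
  have hfB_cont : Continuous fB := by
    rw [funext hfB]
    refine continuous_const.mul ?_
    exact intervalIntegral.continuous_parametric_intervalIntegral_of_continuous'
      (by fun_prop (disch := exact hα.le)) _ _
  have hFB_cont : Continuous FB := by
    rw [funext hFB]
    refine continuous_const.mul ?_
    exact intervalIntegral.continuous_parametric_intervalIntegral_of_continuous'
      (by fun_prop (disch := exact hα.le)) _ _
  have hFB_lim : Tendsto (fun P : ℝ => FB (γB * (1 + γF) / P)) atTop (𝓝 0) := by
    have hFB_zero : FB 0 = 0 := by simp [hFB]
    exact hFB_zero ▸ hFB_cont.continuousAt.tendsto.comp (tendsto_const_nhds.div_atTop tendsto_id)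
  have hfirst := tendsto_pow_mul_integral_zero_div_of_monotoneOn (c := γB * (1 + γF)) K
    (by positivity) hγF.le hfB_cont.continuousOn hΦ_nonneg hΦ_mono (hΦ_lim _ (by positivity))
  have hsecond := (tendsto_const_nhds (x := (1 : ℝ)) |>.sub hFB_lim).mul (hΦ_lim γF hγF.le)
  have hsum := hfirst.add hsecond
  rw [sub_zero, one_mul, zero_add] at hsum
  refine hsum.congr' ?_
  filter_upwards [eventually_gt_atTop 0] with P hP
  rw [hPout P hP]
  ring

/-- Exact-integral version of Corollary 8: the CS-SGF-PC outage probability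
`P_out(P) = ∫_0^{γB(1+γF)/P} fB(w) Φ(γF w + γF/P) dw + (1 - FB(γB(1+γF)/P)) Φ(γF/P)`
satisfies `P^K P_out(P) → γF^K (2/DF²) ∫_0^{DF} (1+r^α)^K r dr` as `P → ∞`,
i.e. a diversity order of `K` is achieved for all positive target SINRs. -/
theorem cs_sgf_pc_full_diversity (α DF D0 D1 γB γF : ℝ)
    (hα : 0 < α) (hDF : 0 < DF) (hD0 : 0 ≤ D0) (hD01 : D0 < D1)
    (hγB : 0 < γB) (hγF : 0 < γF) (K : ℕ) (hK : 1 ≤ K)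
    (Φ fB FB Pout : ℝ → ℝ)
    (hΦ : ∀ x, Φ x = (2 / DF ^ 2) *
      ∫ r in (0:ℝ)..DF, (1 - Real.exp (-(1 + r ^ α) * x)) ^ K * r)
    (hfB : ∀ w, fB w = (2 / (D1 ^ 2 - D0 ^ 2)) *
      ∫ r in D0..D1, (1 + r ^ α) * Real.exp (-(1 + r ^ α) * w) * r)
    (hFB : ∀ y, FB y = (2 / (D1 ^ 2 - D0 ^ 2)) *
      ∫ r in D0..D1, (1 - Real.exp (-(1 + r ^ α) * y)) * r)
    (hPout : ∀ P : ℝ, 0 < P → Pout P =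
      (∫ w in (0:ℝ)..(γB * (1 + γF) / P), fB w * Φ (γF * w + γF / P)) +
        (1 - FB (γB * (1 + γF) / P)) * Φ (γF / P)) :
    Filter.Tendsto (fun P : ℝ => P ^ K * Pout P) Filter.atTop
      (nhds (γF ^ K * ((2 / DF ^ 2) * ∫ r in (0:ℝ)..DF, (1 + r ^ α) ^ K * r))) :=
  cs_sgf_pc_full_diversity_general α DF D0 D1 γB γF hα hDF hγB hγF K Φ fB FB Pout hΦ hfB hFB hPout
end

section
/- Let α > 0, D_F > 0, 0 ≤ D_0 < D_1, and γ_B, γ_F > 0 with γ_B·γ_F > 1, and let K ≥ 1 be a natural number. Define Φ_K(x) = (2/D_F²)·∫_0^{D_F} (1 − exp(−(1+r^α)·x))^K·r dr, f_B(w) = (2/(D_1²−D_0²))·∫_{D_0}^{D_1} (1+r^α)·exp(−(1+r^α)·w)·r dr, and F_B(y) = (2/(D_1²−D_0²))·∫_{D_0}^{D_1} (1 − exp(−(1+r^α)·y))·r dr. For P > 0, set α_1(P) = γ_B·(1+γ_F)/P and define P_out(P) = ∫_0^{∞} f_B(w)·Φ_K(γ_F·w + γ_F/P) dw − ∫_{α_1(P)}^{∞}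 f_B(w)·Φ_K((P·w − γ_B)/(P·γ_B)) dw + (1 − F_B(α_1(P)))·Φ_K(γ_F/P). Then lim_{P→∞} P_out(P) = ∫_0^{∞} f_B(w)·( Φ_K(γ_F·w) − Φ_K(w/γ_B) ) dw, and this limit is strictly positive. -/
open Real Filter MeasureTheory Set Topology

/-!
As `P → ∞`, the argument `γF w + γF / P` of the first integral tends to `γF w`; the lower
limit `α₁(P)` of the second tends to `0` while its argument `(P w - γB) / (P γB)` tends to
`w / γB`; and the last term tends to `(1 - F_B(0)) Φ_K(0) = 0`. Since `‖Φ_K‖ ≤ 1` on `[0, ∞)`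
and `f_B(w) ≤ f_B(0) e^{-w}`, dominated convergence justifies both integral limits. The floor
is positive because `f_B > 0`, `Φ_K` is strictly increasing on `[0, ∞)`, and `w / γB < γF w`
for `w > 0` precisely because `γB γF > 1`.
-/

theorem setIntegral_pos_of_pos_on {X : Type*} [MeasurableSpace X] {μ : Measure X} {s : Set X}
    {f : X → ℝ} (hs : MeasurableSet s) (hμs : μ s ≠ 0) (hf : IntegrableOn f s μ)
    (hpos : ∀ x ∈ s, 0 < f x) : 0 < ∫ x in s, f x ∂μ := by
  rw [setIntegral_pos_iff_support_of_nonneg_ae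
    ((ae_restrict_iff' hs).2 (ae_of_all _ fun x hx => (hpos x hx).le)) hf,
    inter_eq_right.2 (show s ⊆ Function.support f from fun x hx => (hpos x hx).ne')]
  exact pos_iff_ne_zero.2 hμs

section OutageLimit

variable {f Φ : ℝ → ℝ} {C : ℝ}

theorem integrableOn_Ioi_mul_comp {g : ℝ → ℝ} (hf : IntegrableOn f (Ioi 0))
    (hΦ : Continuous Φ) (hΦC : ∀ x, 0 ≤ x → ‖Φ x‖ ≤ C) (hg : Measurable g)
    (hg0 : ∀ w, 0 < w → 0 ≤ g w) :
    IntegrableOn (fun w => f w * Φ (g w)) (Ioi 0) :=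
  hf.mul_bdd (hΦ.measurable.comp hg).aestronglyMeasurable
    ((ae_restrict_iff' measurableSet_Ioi).2 (ae_of_all _ fun w hw => hΦC _ (hg0 w hw)))

theorem tendsto_setIntegral_Ioi_mul_comp {ι : Type*} {l : Filter ι} [l.IsCountablyGenerated]
    {h : ℝ → ℝ} {a : ι → ℝ} {g : ι → ℝ → ℝ} (hf : IntegrableOn f (Ioi 0))
    (hΦ : Continuous Φ) (hΦC : ∀ x, 0 ≤ x → ‖Φ x‖ ≤ C)
    (ha : Tendsto a l (𝓝 0)) (ha0 : ∀ᶠ i in l, 0 ≤ a i) (hg : ∀ i, Measurable (g i))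
    (hg0 : ∀ᶠ i in l, ∀ w, a i < w → 0 ≤ g i w)
    (hgh : ∀ w, 0 < w → Tendsto (fun i => g i w) l (𝓝 (h w))) :
    Tendsto (fun i => ∫ w in Ioi (a i), f w * Φ (g i w)) l
      (𝓝 (∫ w in Ioi 0, f w * Φ (h w))) := by
  have hC : 0 ≤ C := (norm_nonneg _).trans (hΦC 0 le_rfl)
  have hind : ∀ᶠ i in l, ∫ w in Ioi 0, (Ioi (a i)).indicator (fun w => f w * Φ (g i w)) w =
      ∫ w in Ioi (a i), f w * Φ (g i w) := by
    filter_upwards [ha0] with i hi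
    rw [setIntegral_indicator measurableSet_Ioi, Ioi_inter_Ioi, max_eq_right hi]
  refine (tendsto_integral_filter_of_dominated_convergence (fun w => C * ‖f w‖)
    (Eventually.of_forall fun i => ?_) ?_ (hf.norm.const_mul C) ?_).congr' hind
  · exact (hf.aestronglyMeasurable.mul
      (hΦ.measurable.comp (hg i)).aestronglyMeasurable).indicator measurableSet_Ioi
  · filter_upwards [hg0] with i hi
    refine (ae_restrict_iff' measurableSet_Ioi).2 (ae_of_all _ fun w _ => ?_)
    rw [indicator_apply]
    split_ifs with hw
    · rw [norm_mul, mul_comm]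
      exact mul_le_mul_of_nonneg_right (hΦC _ (hi w hw)) (norm_nonneg _)
    · rw [norm_zero]
      positivity
  · refine (ae_restrict_iff' measurableSet_Ioi).2 (ae_of_all _ fun w hw => ?_)
    refine (((hΦ.tendsto _).comp (hgh w hw)).const_mul (f w)).congr' ?_
    filter_upwards [ha.eventually_lt_const hw] with i hi
    exact (indicator_of_mem hi (fun w => f w * Φ (g i w))).symm

/-- The outage probability `P_out(P)` of the CS-SGF scheme, eq. (22), with `Φ`, `f`, `F`
standing for `Φ_K`, `f_B`, `F_B`. -/
noncomputable def csSgfOutage (Φ f F : ℝ → ℝ) (γB γF P : ℝ) : ℝ :=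
  (∫ w in Ioi 0, f w * Φ (γF * w + γF / P)) -
    (∫ w in Ioi (γB * (1 + γF) / P), f w * Φ ((P * w - γB) / (P * γB))) +
    (1 - F (γB * (1 + γF) / P)) * Φ (γF / P)

noncomputable def csSgfOutageFloor (Φ f : ℝ → ℝ) (γB γF : ℝ) : ℝ :=
  ∫ w in Ioi 0, f w * (Φ (γF * w) - Φ (w / γB))

variable {γB γF : ℝ}

theorem tendsto_csSgfOutage_atTop {F : ℝ → ℝ} (hγB : 0 < γB) (hγF : 0 ≤ γF)
    (hf : IntegrableOn f (Ioi 0)) (hΦ : Continuous Φ) (hΦC : ∀ x, 0 ≤ x → ‖Φ x‖ ≤ C)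
    (hΦ0 : Φ 0 = 0) (hF : ContinuousAt F 0) :
    Tendsto (csSgfOutage Φ f F γB γF) atTop (𝓝 (csSgfOutageFloor Φ f γB γF)) := by
  have hdiv (c : ℝ) : Tendsto (fun P : ℝ => c / P) atTop (𝓝 0) :=
    tendsto_const_nhds.div_atTop tendsto_id
  have hfirst : Tendsto (fun P => ∫ w in Ioi 0, f w * Φ (γF * w + γF / P)) atTop
      (𝓝 (∫ w in Ioi 0, f w * Φ (γF * w))) :=
    tendsto_setIntegral_Ioi_mul_comp (a := fun _ => 0) hf hΦ hΦC tendsto_const_nhds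
      (.of_forall fun _ => le_rfl) (fun _ => by fun_prop)
      (eventually_gt_atTop 0 |>.mono fun P hP w hw => by positivity)
      (fun w _ => by simpa using (hdiv γF).const_add (γF * w))
  have hsecond : Tendsto
      (fun P => ∫ w in Ioi (γB * (1 + γF) / P), f w * Φ ((P * w - γB) / (P * γB))) atTop
      (𝓝 (∫ w in Ioi 0, f w * Φ (w / γB))) := by
    refine tendsto_setIntegral_Ioi_mul_comp hf hΦ hΦC (hdiv _)
      (eventually_gt_atTop 0 |>.mono fun P hP => by positivity) (fun _ => by fun_prop)
      (eventually_gt_atTop 0 |>.mono fun P hP w hw => ?_) (fun w _ => ?_)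
    · have := (div_lt_iff₀ hP).1 hw
      exact div_nonneg (by nlinarith) (by positivity)
    · have hlim := (hdiv 1).const_sub (w / γB)
      rw [sub_zero] at hlim
      refine hlim.congr' ?_
      filter_upwards [eventually_gt_atTop 0] with P hP
      field_simp
  have hlast : Tendsto (fun P => (1 - F (γB * (1 + γF) / P)) * Φ (γF / P)) atTop (𝓝 0) := by
    simpa [hΦ0] using
      (hF.tendsto.comp (hdiv _)).const_sub 1 |>.mul ((hΦ.tendsto 0).comp (hdiv γF))
  have hsplit : csSgfOutageFloor Φ f γB γF =
      (∫ w in Ioi 0, f w * Φ (γF * w)) - ∫ w in Ioi 0, f w * Φ (w / γB) := by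
    simp only [csSgfOutageFloor, mul_sub]
    exact integral_sub
      (integrableOn_Ioi_mul_comp hf hΦ hΦC (by fun_prop) fun w hw => by positivity)
      (integrableOn_Ioi_mul_comp hf hΦ hΦC (by fun_prop) fun w hw => by positivity)
  have hlim := (hfirst.sub hsecond).add hlast
  rw [add_zero, ← hsplit] at hlim
  exact hlim

theorem csSgfOutageFloor_pos (hγB : 0 < γB) (hprod : 1 < γB * γF)
    (hf : IntegrableOn f (Ioi 0)) (hfpos : ∀ w, 0 < w → 0 < f w) (hΦ : Continuous Φ)
    (hΦC : ∀ x, 0 ≤ x → ‖Φ x‖ ≤ C) (hΦmono : StrictMonoOn Φ (Ici 0)) :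
    0 < csSgfOutageFloor Φ f γB γF := by
  have hγF : 0 < γF := pos_of_mul_pos_right (one_pos.trans hprod) hγB.le
  refine setIntegral_pos_of_pos_on measurableSet_Ioi (by simp) ?_ fun w (hw : 0 < w) => ?_
  · simp only [mul_sub]
    exact (integrableOn_Ioi_mul_comp hf hΦ hΦC (by fun_prop) fun w hw => by positivity).sub
      (integrableOn_Ioi_mul_comp hf hΦ hΦC (by fun_prop) fun w hw => by positivity)
  · refine mul_pos (hfpos w hw) (sub_pos.2 (hΦmono (mem_Ici.2 (by positivity))
      (mem_Ici.2 (by positivity)) ?_))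
    rw [div_lt_iff₀ hγB]
    nlinarith

end OutageLimit

section RadialGains

/- These are `Φ_K`, `f_B` and `F_B`, where `s r` is the rate of the exponentially distributed
channel gain of a user at distance `r` (`s r = 1 + r ^ α` in the paper). -/

noncomputable def scheduledGainCDF (s : ℝ → ℝ) (D : ℝ) (K : ℕ) (x : ℝ) : ℝ :=
  (2 / D ^ 2) * ∫ r in (0 : ℝ)..D, (1 - exp (-s r * x)) ^ K * r

noncomputable def ringGainPDF (s : ℝ → ℝ) (D₀ D₁ w : ℝ) : ℝ :=
  (2 / (D₁ ^ 2 - D₀ ^ 2)) * ∫ r in D₀..D₁, s r * exp (-s r * w) * r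

noncomputable def ringGainCDF (s : ℝ → ℝ) (D₀ D₁ y : ℝ) : ℝ :=
  (2 / (D₁ ^ 2 - D₀ ^ 2)) * ∫ r in D₀..D₁, (1 - exp (-s r * y)) * r

variable {s : ℝ → ℝ} {D D₀ D₁ : ℝ} {K : ℕ}

theorem continuous_scheduledGainCDF (hs : Continuous s) (D : ℝ) (K : ℕ) :
    Continuous (scheduledGainCDF s D K) :=
  continuous_const.mul
    (intervalIntegral.continuous_parametric_intervalIntegral_of_continuous' (by fun_prop) _ _)

theorem continuous_ringGainPDF (hs : Continuous s) (D₀ D₁ : ℝ) :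
    Continuous (ringGainPDF s D₀ D₁) :=
  continuous_const.mul
    (intervalIntegral.continuous_parametric_intervalIntegral_of_continuous' (by fun_prop) _ _)

theorem continuous_ringGainCDF (hs : Continuous s) (D₀ D₁ : ℝ) :
    Continuous (ringGainCDF s D₀ D₁) :=
  continuous_const.mul
    (intervalIntegral.continuous_parametric_intervalIntegral_of_continuous' (by fun_prop) _ _)

theorem scheduledGainCDF_zero (hK : K ≠ 0) : scheduledGainCDF s D K 0 = 0 := by
  simp [scheduledGainCDF, zero_pow hK]

theorem one_sub_exp_neg_mul_nonneg {a x : ℝ} (ha : 0 ≤ a) (hx : 0 ≤ x) :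
    0 ≤ 1 - exp (-a * x) :=
  sub_nonneg.2 (exp_le_one_iff.2 (by nlinarith))

theorem norm_scheduledGainCDF_le_one (hD : 0 < D) (hs : ∀ r, 0 < r → 0 ≤ s r) {x : ℝ}
    (hx : 0 ≤ x) : ‖scheduledGainCDF s D K x‖ ≤ 1 := by
  have hI : ‖∫ r in (0 : ℝ)..D, (1 - exp (-s r * x)) ^ K * r‖ ≤ ∫ r in (0 : ℝ)..D, r := by
    refine intervalIntegral.norm_integral_le_of_norm_le hD.le (ae_of_all _ fun r hr => ?_)
      intervalIntegral.intervalIntegrable_id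
    have h0 := one_sub_exp_neg_mul_nonneg (hs r hr.1) hx
    have h1 : 1 - exp (-s r * x) ≤ 1 := sub_le_self _ (exp_pos _).le
    rw [norm_mul, norm_pow, Real.norm_of_nonneg h0, Real.norm_of_nonneg hr.1.le]
    exact mul_le_of_le_one_left hr.1.le (pow_le_one₀ h0 h1)
  rw [integral_id, zero_pow two_ne_zero, sub_zero] at hI
  rw [scheduledGainCDF, norm_mul, Real.norm_of_nonneg (by positivity)]
  calc 2 / D ^ 2 * ‖∫ r in (0 : ℝ)..D, (1 - exp (-s r * x)) ^ K * r‖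
      ≤ 2 / D ^ 2 * (D ^ 2 / 2) := by gcongr
    _ = 1 := by field_simp

theorem strictMonoOn_scheduledGainCDF (hs : Continuous s) (hs0 : ∀ r, 0 < r → 0 < s r)
    (hD : 0 < D) (hK : K ≠ 0) : StrictMonoOn (scheduledGainCDF s D K) (Ici 0) := by
  intro x hx y _ hxy
  have hint : ∀ z, IntervalIntegrable (fun r => (1 - exp (-s r * z)) ^ K * r) volume 0 D :=
    fun z => Continuous.intervalIntegrable (by fun_prop) _ _
  have hpos : 0 < ∫ r in (0 : ℝ)..D,
      ((1 - exp (-s r * y)) ^ K * r - (1 - exp (-s r * x)) ^ K * r) := by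
    refine intervalIntegral.intervalIntegral_pos_of_pos_on ((hint y).sub (hint x))
      (fun r hr => ?_) hD
    have hexp : exp (-s r * y) < exp (-s r * x) := exp_lt_exp.2 (by nlinarith [hs0 r hr.1])
    have hpow := pow_lt_pow_left₀ (by linarith : 1 - exp (-s r * x) < 1 - exp (-s r * y))
      (one_sub_exp_neg_mul_nonneg (hs0 r hr.1).le hx) hK
    rw [← sub_mul]
    exact mul_pos (sub_pos.2 hpow) hr.1
  rw [intervalIntegral.integral_sub (hint y) (hint x)] at hpos
  exact mul_lt_mul_of_pos_left (sub_pos.1 hpos) (by positivity)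

theorem ringGainPDF_pos (hs : Continuous s) (hs0 : ∀ r, 0 < r → 0 < s r) (hD₀ : 0 ≤ D₀)
    (hD : D₀ < D₁) (w : ℝ) : 0 < ringGainPDF s D₀ D₁ w := by
  have hsq : 0 < D₁ ^ 2 - D₀ ^ 2 := by nlinarith
  refine mul_pos (by positivity) (intervalIntegral.intervalIntegral_pos_of_pos_on
    (Continuous.intervalIntegrable (by fun_prop) _ _) (fun r hr => ?_) hD)
  have := hs0 r (hD₀.trans_lt hr.1)
  have := hD₀.trans_lt hr.1
  positivity

theorem ringGainPDF_le_mul_exp_neg (hs : Continuous s) (hs1 : ∀ r, 0 ≤ r → 1 ≤ s r)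
    (hD₀ : 0 ≤ D₀) (hD : D₀ ≤ D₁) {w : ℝ} (hw : 0 ≤ w) :
    ringGainPDF s D₀ D₁ w ≤ ringGainPDF s D₀ D₁ 0 * exp (-w) := by
  have hc : 0 ≤ 2 / (D₁ ^ 2 - D₀ ^ 2) :=
    div_nonneg zero_le_two (sub_nonneg.2 (pow_le_pow_left₀ hD₀ hD 2))
  rw [ringGainPDF, ringGainPDF, mul_assoc, ← intervalIntegral.integral_mul_const]
  refine mul_le_mul_of_nonneg_left (intervalIntegral.integral_mono_on hD
    (Continuous.intervalIntegrable (by fun_prop) _ _)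
    (Continuous.intervalIntegrable (by fun_prop) _ _) fun r hr => ?_) hc
  have hr : 0 ≤ r := hD₀.trans hr.1
  have hsr : 0 ≤ s r := zero_le_one.trans (hs1 r hr)
  have hexp : exp (-s r * w) ≤ exp (-s r * 0) * exp (-w) := by
    rw [mul_zero, exp_zero, one_mul]
    exact exp_le_exp.2 (by nlinarith [hs1 r hr])
  calc s r * exp (-s r * w) * r ≤ s r * (exp (-s r * 0) * exp (-w)) * r := by gcongr
    _ = s r * exp (-s r * 0) * r * exp (-w) := by ring

theorem integrableOn_ringGainPDF_Ioi (hs : Continuous s) (hs1 : ∀ r, 0 ≤ r → 1 ≤ s r)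
    (hD₀ : 0 ≤ D₀) (hD : D₀ < D₁) : IntegrableOn (ringGainPDF s D₀ D₁) (Ioi 0) := by
  have hexp : IntegrableOn (fun w => ringGainPDF s D₀ D₁ 0 * exp (-w)) (Ioi 0) := by
    simpa [IntegrableOn] using
      (exp_neg_integrableOn_Ioi 0 one_pos).const_mul (ringGainPDF s D₀ D₁ 0)
  refine hexp.mono' (continuous_ringGainPDF hs D₀ D₁).aestronglyMeasurable
    ((ae_restrict_iff' measurableSet_Ioi).2 (ae_of_all _ fun w hw => ?_))
  rw [Real.norm_of_nonneg (ringGainPDF_pos hs (fun r hr => one_pos.trans_le (hs1 r hr.le))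
    hD₀ hD w).le]
  exact ringGainPDF_le_mul_exp_neg hs hs1 hD₀ hD.le (le_of_lt hw)

end RadialGains

/-- Exact-integral version of the second half of Corollary 4: when `γB γF > 1`, the
fixed-power CS-SGF outage probability
`P_out(P) = ∫_0^∞ fB(w) Φ(γF w + γF/P) dw - ∫_{α1(P)}^∞ fB(w) Φ((P w - γB)/(P γB)) dw
 + (1 - FB(α1(P))) Φ(γF/P)`
tends, as `P → ∞`, to the strictly positive error floor
`∫_0^∞ fB(w) (Φ(γF w) - Φ(w/γB)) dw`. -/
theorem cs_sgf_error_floor_large_rates (α DF D0 D1 γB γF : ℝ)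
    (hα : 0 < α) (hDF : 0 < DF) (hD0 : 0 ≤ D0) (hD01 : D0 < D1)
    (hγB : 0 < γB) (hγF : 0 < γF) (hprod : 1 < γB * γF) (K : ℕ) (hK : 1 ≤ K)
    (Φ fB FB Pout : ℝ → ℝ) (a1 : ℝ → ℝ)
    (hΦ : ∀ x, Φ x = (2 / DF ^ 2) *
      ∫ r in (0:ℝ)..DF, (1 - Real.exp (-(1 + r ^ α) * x)) ^ K * r)
    (hfB : ∀ w, fB w = (2 / (D1 ^ 2 - D0 ^ 2)) *
      ∫ r in D0..D1, (1 + r ^ α) * Real.exp (-(1 + r ^ α) * w) * r)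
    (hFB : ∀ y, FB y = (2 / (D1 ^ 2 - D0 ^ 2)) *
      ∫ r in D0..D1, (1 - Real.exp (-(1 + r ^ α) * y)) * r)
    (ha1 : ∀ P, a1 P = γB * (1 + γF) / P)
    (hPout : ∀ P : ℝ, 0 < P → Pout P =
      (∫ w in Set.Ioi (0:ℝ), fB w * Φ (γF * w + γF / P)) -
        (∫ w in Set.Ioi (a1 P), fB w * Φ ((P * w - γB) / (P * γB))) +
        (1 - FB (a1 P)) * Φ (γF / P)) :
    Filter.Tendsto Pout Filter.atTop
        (nhds (∫ w in Set.Ioi (0:ℝ), fB w * (Φ (γF * w) - Φ (w / γB)))) ∧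
      0 < ∫ w in Set.Ioi (0:ℝ), fB w * (Φ (γF * w) - Φ (w / γB)) := by
  have hs : Continuous fun r : ℝ => 1 + r ^ α :=
    continuous_const.add (continuous_rpow_const hα.le)
  have hs1 (r : ℝ) (hr : 0 ≤ r) : 1 ≤ 1 + r ^ α := le_add_of_nonneg_right (rpow_nonneg hr α)
  have hs0 (r : ℝ) (hr : 0 < r) : 0 < 1 + r ^ α := one_pos.trans_le (hs1 r hr.le)
  have hΦeq : Φ = scheduledGainCDF (fun r => 1 + r ^ α) DF K := funext hΦ
  have hfBeq : fB = ringGainPDF (fun r => 1 + r ^ α) D0 D1 := funext hfB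
  have hFBeq : FB = ringGainCDF (fun r => 1 + r ^ α) D0 D1 := funext hFB
  obtain rfl : a1 = fun P => γB * (1 + γF) / P := funext ha1
  have hΦc : Continuous Φ := hΦeq ▸ continuous_scheduledGainCDF hs DF K
  have hΦ1 (x : ℝ) (hx : 0 ≤ x) : ‖Φ x‖ ≤ 1 :=
    hΦeq ▸ norm_scheduledGainCDF_le_one hDF (fun r hr => (hs0 r hr).le) hx
  have hΦmono : StrictMonoOn Φ (Ici 0) :=
    hΦeq ▸ strictMonoOn_scheduledGainCDF hs hs0 hDF (by omega)
  have hΦ0 : Φ 0 = 0 := hΦeq ▸ scheduledGainCDF_zero (by omega)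
  have hfBint : IntegrableOn fB (Ioi 0) := hfBeq ▸ integrableOn_ringGainPDF_Ioi hs hs1 hD0 hD01
  have hfBpos (w : ℝ) : 0 < fB w := hfBeq ▸ ringGainPDF_pos hs hs0 hD0 hD01 w
  have hFBc : Continuous FB := hFBeq ▸ continuous_ringGainCDF hs D0 D1
  refine ⟨(tendsto_csSgfOutage_atTop hγB hγF.le hfBint hΦc hΦ1 hΦ0 hFBc.continuousAt).congr'
    (eventually_gt_atTop 0 |>.mono fun P hP => (hPout P hP).symm), ?_⟩
  exact csSgfOutageFloor_pos hγB hprod hfBint (fun w _ => hfBpos w) hΦc hΦ1 hΦmono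
end
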